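/- arXiv:2404.18015 — 6 statements merged into one kernel-verified Lean document; each statement's English description precedes it below -/
import Mathlib

section
/- Let F : ℝ^d → ℝ be continuously differentiable, let N ≥ 1, and let x_j : ℝ → ℝ^d and m_j : ℝ → ℝ (j = 1,…,N) be differentiable functions with m_j(t) > 0 for all t, satisfying the deterministic swarm system x_j'(t) = -∇F(x_j(t)) and m_j'(t) = -m_j(t)·(F(x_j(t)) - f̄(t)), where f̄(t) = (Σ_{j=1}^N m_j(t)·F(x_j(t))) / (Σ_{j=1}^N m_j(t)) is the provisional minimum. Then f̄ is non-increasing: d/dt f̄(t) ≤ 0 for all t. -/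
open scoped BigOperators

/-- **Decrease of the provisional minimum for the deterministic swarm system.**
If each position evolves by gradient descent `x_j' = -∇F(x_j)` and each (positive)
mass by `m_j' = -m_j (F(x_j) - f̄)`, where `f̄` is the mass-weighted average of the
objective values, then `f̄` is non-increasing. -/
theorem provisional_minimum_nonincreasing
    {d N : ℕ} (hN : 1 ≤ N)
    (F : EuclideanSpace ℝ (Fin d) → ℝ) (hF : ContDiff ℝ 1 F)
    (x : Fin N → ℝ → EuclideanSpace ℝ (Fin d)) (m : Fin N → ℝ → ℝ)
    (hm_pos : ∀ j t, 0 < m j t)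
    (fbar : ℝ → ℝ)
    (hfbar : ∀ t, fbar t = (∑ j, m j t * F (x j t)) / (∑ j, m j t))
    (hx : ∀ j t, HasDerivAt (x j) (-gradient F (x j t)) t)
    (hm : ∀ j t, HasDerivAt (m j) (-(m j t) * (F (x j t) - fbar t)) t) :
    ∀ t, deriv fbar t ≤ 0 := by
  intro t
  have hNe : Nonempty (Fin N) := Fin.pos_iff_nonempty.mp hN
  set c := fbar t with hc
  set g : Fin N → EuclideanSpace ℝ (Fin d) := fun j => gradient F (x j t) with hg
  have hMpos : 0 < ∑ j, m j t :=
    Finset.sum_pos (fun j _ => hm_pos j t) Finset.univ_nonempty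
  have hMne : (∑ j, m j t) ≠ 0 := ne_of_gt hMpos
  -- derivative of F ∘ x j
  have hFx : ∀ j : Fin N, HasDerivAt (fun s => F (x j s)) (-(‖g j‖ ^ 2)) t := by
    intro j
    have hdF : HasGradientAt F (g j) (x j t) :=
      (hF.differentiable one_ne_zero (x j t)).hasGradientAt
    have h2 := hdF.hasFDerivAt.comp_hasDerivAt t (hx j t)
    refine h2.congr_deriv ?_
    simp only [InnerProductSpace.toDual_apply_apply, hg, inner_neg_right,
      real_inner_self_eq_norm_sq]
  -- derivative of numerator S and denominator M
  have hS : HasDerivAt (fun s => ∑ j, m j s * F (x j s))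
      (∑ j, (-(m j t) * (F (x j t) - c) * F (x j t) + m j t * (-(‖g j‖ ^ 2)))) t :=
    HasDerivAt.fun_sum fun j _ => (hm j t).mul (hFx j)
  have hM : HasDerivAt (fun s => ∑ j, m j s)
      (∑ j, -(m j t) * (F (x j t) - c)) t :=
    HasDerivAt.fun_sum fun j _ => hm j t
  -- key identity S t = c * M t
  have hSM : (∑ j, m j t * F (x j t)) = c * ∑ j, m j t := by
    rw [hc, hfbar t]; field_simp
  -- M' = 0
  have hM0 : (∑ j, -(m j t) * (F (x j t) - c)) = 0 := by
    have : (∑ j, -(m j t) * (F (x j t) - c))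
        = -((∑ j, m j t * F (x j t)) - c * ∑ j, m j t) := by
      rw [Finset.mul_sum, ← Finset.sum_sub_distrib, ← Finset.sum_neg_distrib]
      exact Finset.sum_congr rfl fun j _ => by ring
    rw [this, hSM, sub_self, neg_zero]
  -- S' ≤ 0
  set D : ℝ := ∑ j, (-(m j t) * (F (x j t) - c) * F (x j t) + m j t * (-(‖g j‖ ^ 2)))
    with hD
  have hDle : D ≤ 0 := by
    have hkey : D = (∑ j, (-(m j t * (F (x j t) - c) ^ 2) - m j t * ‖g j‖ ^ 2))
        + c * ∑ j, -(m j t) * (F (x j t) - c) := by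
      rw [hD, Finset.mul_sum, ← Finset.sum_add_distrib]
      exact Finset.sum_congr rfl fun j _ => by ring
    rw [hkey, hM0, mul_zero, add_zero]
    refine Finset.sum_nonpos fun j _ => ?_
    have h1 : 0 ≤ m j t * (F (x j t) - c) ^ 2 :=
      mul_nonneg (hm_pos j t).le (sq_nonneg _)
    have h2 : 0 ≤ m j t * ‖g j‖ ^ 2 := mul_nonneg (hm_pos j t).le (sq_nonneg _)
    linarith
  -- fbar is S / M
  have hfbar_eq : fbar = fun s => (∑ j, m j s * F (x j s)) / (∑ j, m j s) :=
    funext hfbar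
  have hquot : HasDerivAt fbar
      ((D * (∑ j, m j t) - (∑ j, m j t * F (x j t)) * (∑ j, -(m j t) * (F (x j t) - c)))
        / (∑ j, m j t) ^ 2) t := by
    rw [hfbar_eq]; exact hS.div hM hMne
  rw [hquot.deriv, hM0, mul_zero, sub_zero]
  apply div_nonpos_of_nonpos_of_nonneg
  · exact mul_nonpos_of_nonpos_of_nonneg hDle hMpos.le
  · positivity
end

section
/- Let F : ℝ^d → ℝ be continuously differentiable, let N ≥ 1, and let x_j : ℝ → ℝ^d and m_j : ℝ → ℝ (j = 1,…,N) be differentiable functions with m_j(t) > 0 for all t, satisfying x_j'(t) = -∇F(x_j(t)) and m_j'(t) = -m_j(t)·(F(x_j(t)) - f̄(t)), where f̄(t) = (Σ_{j=1}^N m_j(t)·F(x_j(t))) / (Σ_{j=1}^N m_j(t)). Then, writing M(t) = Σ_{j=1}^N m_j(t), the provisional minimum satisfies the exact dissipation identity d/dt f̄(t) = -(1/M(t)) Σ_{j=1}^N m_j(t)·(F(x_j(t)) - f̄(t))² - (1/M(t)) Σ_{j=1}^N m_j(t)·‖∇F(x_j(t))‖². -/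
open scoped BigOperators

/-- **Exact dissipation identity for the provisional minimum of the deterministic
swarm system.** With positions evolving by `x_j' = -∇F(x_j)` and masses by
`m_j' = -m_j (F(x_j) - f̄)`, writing `M(t) = ∑ j, m_j(t)`, one has
`f̄'(t) = -(1/M) ∑ m_j (F(x_j) - f̄)² - (1/M) ∑ m_j ‖∇F(x_j)‖²`. -/
theorem provisional_minimum_dissipation
    {d N : ℕ} (hN : 1 ≤ N)
    (F : EuclideanSpace ℝ (Fin d) → ℝ) (hF : ContDiff ℝ 1 F)
    (x : Fin N → ℝ → EuclideanSpace ℝ (Fin d)) (m : Fin N → ℝ → ℝ)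
    (hm_pos : ∀ j t, 0 < m j t)
    (fbar : ℝ → ℝ)
    (hfbar : ∀ t, fbar t = (∑ j, m j t * F (x j t)) / (∑ j, m j t))
    (hx : ∀ j t, HasDerivAt (x j) (-gradient F (x j t)) t)
    (hm : ∀ j t, HasDerivAt (m j) (-(m j t) * (F (x j t) - fbar t)) t) :
    ∀ t, HasDerivAt fbar
      (-(1 / (∑ j, m j t)) * ∑ j, m j t * (F (x j t) - fbar t) ^ 2
        - (1 / (∑ j, m j t)) * ∑ j, m j t * ‖gradient F (x j t)‖ ^ 2) t := by
  intro t
  haveI : NeZero N := ⟨Nat.one_le_iff_ne_zero.mp hN⟩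
  have hMpos : 0 < ∑ j, m j t := Finset.sum_pos (fun j _ => hm_pos j t) Finset.univ_nonempty
  have hMne : (∑ j, m j t) ≠ 0 := hMpos.ne'
  -- derivative of F ∘ x j
  have hFx : ∀ j : Fin N, HasDerivAt (fun s => F (x j s))
      (-‖gradient F (x j t)‖ ^ 2) t := by
    intro j
    have hg : HasGradientAt F (gradient F (x j t)) (x j t) :=
      (hF.differentiable one_ne_zero (x j t)).hasGradientAt
    have := hg.hasFDerivAt.comp_hasDerivAt t (hx j t)
    convert this using 1
    · rfl
    · rfl
    · rfl
    rw [InnerProductSpace.toDual_apply_apply, inner_neg_right, real_inner_self_eq_norm_sq]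
  -- derivative of numerator A and denominator M
  have hA : HasDerivAt (fun s => ∑ j, m j s * F (x j s))
      (∑ j, (-(m j t) * (F (x j t) - fbar t) * F (x j t) + m j t * (-‖gradient F (x j t)‖ ^ 2))) t :=
    HasDerivAt.fun_sum fun j _ => (hm j t).mul (hFx j)
  have hM : HasDerivAt (fun s => ∑ j, m j s)
      (∑ j, -(m j t) * (F (x j t) - fbar t)) t :=
    HasDerivAt.fun_sum fun j _ => hm j t
  -- M' = 0
  have hsum : (∑ j, m j t * (F (x j t) - fbar t)) = 0 := by
    have : (∑ j, m j t * (F (x j t) - fbar t))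
        = (∑ j, m j t * F (x j t)) - fbar t * (∑ j, m j t) := by
      rw [Finset.mul_sum, ← Finset.sum_sub_distrib]
      congr 1; ext j; ring
    rw [this, hfbar t, div_mul_cancel₀ _ hMne, sub_self]
  have hM0 : (∑ j, -(m j t) * (F (x j t) - fbar t)) = 0 := by
    have : (∑ j, -(m j t) * (F (x j t) - fbar t))
        = -(∑ j, m j t * (F (x j t) - fbar t)) := by
      rw [← Finset.sum_neg_distrib]; congr 1; ext j; ring
    rw [this, hsum, neg_zero]
  have hdiv := hA.fun_div hM hMne
  have heq : fbar = fun s => (∑ j, m j s * F (x j s)) / (∑ j, m j s) := funext hfbar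
  rw [← heq] at hdiv
  convert hdiv using 1
  · rfl
  · rfl
  rw [hM0, mul_zero, sub_zero]
  -- simplify A'
  have hA' : (∑ j, (-(m j t) * (F (x j t) - fbar t) * F (x j t) + m j t * (-‖gradient F (x j t)‖ ^ 2)))
      = -(∑ j, m j t * (F (x j t) - fbar t) ^ 2) - (∑ j, m j t * ‖gradient F (x j t)‖ ^ 2) := by
    calc (∑ j, (-(m j t) * (F (x j t) - fbar t) * F (x j t) + m j t * (-‖gradient F (x j t)‖ ^ 2)))
        = ∑ j, (-(m j t * (F (x j t) - fbar t) ^ 2) - m j t * ‖gradient F (x j t)‖ ^ 2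
            - fbar t * (m j t * (F (x j t) - fbar t))) :=
          Finset.sum_congr rfl fun j _ => by ring
      _ = _ := by
          rw [Finset.sum_sub_distrib, Finset.sum_sub_distrib, Finset.sum_neg_distrib,
            ← Finset.mul_sum, hsum, mul_zero, sub_zero]
  rw [hA']
  field_simp
end

section
/- Let F : ℝ^d → ℝ be twice continuously differentiable and satisfy: (i) ∇F is Lipschitz with constant L; (ii) 0 ≤ F(x) ≤ D for all x; (iii) |ΔF(x)| ≤ d·L for all x; (iv) there exist x* ∈ ℝ^d, R > 0 and ξ > 0 with F(x*) = 0 and ΔF(x) ≥ ξ·d for all x in the ball B_R(x*); (v) there exists ε' > 0 with {x : F(x) ≤ ε'} ⊆ B_R(x*). Let (ρ_t)_{t≥0} be a family of Borel probability measures on ℝ^d such that F, F², ‖∇F‖² and ΔF are ρ_t-integrable, and suppose f̄(t) := ∫ F dρ_t is differentiable with f̄'(t) = -∫ ‖∇F‖² dρ_t - ( ∫ F² dρ_t - f̄(t)² ) + ∫ ΔF dρ_t for all t ≥ 0. Then, setting ε := d·ξ / ( 2L + D + d·ξ/ε' + d·L/ε' ), one has f̄(t) ≥ min{ ε, f̄(0)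 } for all t ≥ 0; in particular the provisional minimum f̄(t) never falls below min{F* + ε, f̄(0)} with F* = 0. -/
open MeasureTheory

/-- The Laplacian of `F : ℝ^d → ℝ`, defined as the trace of the Hessian
(the derivative of the gradient). -/
noncomputable def laplacian {d : ℕ} (F : EuclideanSpace ℝ (Fin d) → ℝ)
    (x : EuclideanSpace ℝ (Fin d)) : ℝ :=
  ∑ i, fderiv ℝ (fun y => gradient F y) x (EuclideanSpace.single i 1) i

open scoped RealInnerProductSpace
set_option maxHeartbeats 1000000

lemma descent {d : ℕ} (F : EuclideanSpace ℝ (Fin d) → ℝ)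
    (hF : ContDiff ℝ 2 F) (L : NNReal)
    (hLip : LipschitzWith L (fun x => gradient F x))
    (x v : EuclideanSpace ℝ (Fin d)) :
    F (x + v) ≤ F x + ⟪gradient F x, v⟫ + (L : ℝ) / 2 * ‖v‖ ^ 2 := by
  have hdiff : Differentiable ℝ F := hF.differentiable (by norm_num)
  have hφ : ∀ t : ℝ, HasDerivAt (fun t : ℝ => F (x + t • v))
      ⟪gradient F (x + t • v), v⟫ t := by
    intro t
    have hc : HasDerivAt (fun t : ℝ => x + t • v) v t := by
      simpa using (((hasDerivAt_id t).smul_const v).const_add x)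
    have hg := (hdiff (x + t • v)).hasGradientAt.hasFDerivAt
    have := hg.comp_hasDerivAt t hc
    exact this
  have hcontg : Continuous fun t : ℝ => ⟪gradient F (x + t • v), v⟫ := by
    have : Continuous fun t : ℝ => gradient F (x + t • v) :=
      hLip.continuous.comp (by continuity)
    exact this.inner continuous_const
  have hftc : (∫ t in (0:ℝ)..1, ⟪gradient F (x + t • v), v⟫)
      = F (x + v) - F x := by
    have := intervalIntegral.integral_eq_sub_of_hasDerivAt
      (f := fun t : ℝ => F (x + t • v))
      (f' := fun t : ℝ => ⟪gradient F (x + t • v), v⟫)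
      (a := 0) (b := 1) (fun t _ => hφ t)
      (hcontg.intervalIntegrable 0 1)
    simpa using this
  have hmono : (∫ t in (0:ℝ)..1, ⟪gradient F (x + t • v), v⟫)
      ≤ ∫ t in (0:ℝ)..1, (⟪gradient F x, v⟫ + (L : ℝ) * ‖v‖ ^ 2 * t) := by
    apply intervalIntegral.integral_mono_on (by norm_num)
      (hcontg.intervalIntegrable 0 1)
      (by apply Continuous.intervalIntegrable; continuity)
    intro t ht
    have h1 : ⟪gradient F (x + t • v), v⟫ - ⟪gradient F x, v⟫
        = ⟪gradient F (x + t • v) - gradient F x, v⟫ := by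
      rw [inner_sub_left]
    have h2 : ⟪gradient F (x + t • v) - gradient F x, v⟫
        ≤ ‖gradient F (x + t • v) - gradient F x‖ * ‖v‖ := real_inner_le_norm _ _
    have h3 : ‖gradient F (x + t • v) - gradient F x‖ ≤ (L : ℝ) * (t * ‖v‖) := by
      have := hLip.dist_le_mul (x + t • v) x
      simp only [dist_eq_norm] at this
      calc ‖gradient F (x + t • v) - gradient F x‖ ≤ (L : ℝ) * ‖x + t • v - x‖ := this
        _ = (L : ℝ) * (|t| * ‖v‖) := by rw [add_sub_cancel_left, norm_smul]; simp
        _ = (L : ℝ) * (t * ‖v‖) := by rw [abs_of_nonneg ht.1]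
    nlinarith [norm_nonneg v, norm_nonneg (gradient F (x + t • v) - gradient F x),
      mul_le_mul_of_nonneg_right h3 (norm_nonneg v)]
  have hrhs : (∫ t in (0:ℝ)..1, (⟪gradient F x, v⟫ + (L : ℝ) * ‖v‖ ^ 2 * t))
      = ⟪gradient F x, v⟫ + (L : ℝ) / 2 * ‖v‖ ^ 2 := by
    rw [intervalIntegral.integral_add (intervalIntegrable_const)
      (by apply Continuous.intervalIntegrable; continuity)]
    rw [intervalIntegral.integral_const_mul, integral_id]
    simp; ring
  linarith [hftc ▸ hmono, hrhs ▸ hmono]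

lemma grad_sq_le {d : ℕ} (F : EuclideanSpace ℝ (Fin d) → ℝ)
    (hF : ContDiff ℝ 2 F) (L : NNReal)
    (hLip : LipschitzWith L (fun x => gradient F x))
    (hpos : ∀ x, 0 ≤ F x) (x : EuclideanSpace ℝ (Fin d)) :
    ‖gradient F x‖ ^ 2 ≤ 2 * (L : ℝ) * F x := by
  set g := gradient F x with hg
  have key : ∀ t : ℝ, 0 ≤ t →
      0 ≤ F x - t * ‖g‖ ^ 2 + (L : ℝ) / 2 * t ^ 2 * ‖g‖ ^ 2 := by
    intro t ht
    have hd := descent F hF L hLip x (-(t • g))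
    have h1 : ⟪g, -(t • g)⟫ = -(t * ‖g‖ ^ 2) := by
      rw [inner_neg_right, real_inner_smul_right, real_inner_self_eq_norm_sq]
    have h2 : ‖-(t • g)‖ ^ 2 = t ^ 2 * ‖g‖ ^ 2 := by
      rw [norm_neg, norm_smul]; simp [mul_pow, sq_abs]
    rw [h1, h2] at hd
    have := hpos (x + -(t • g))
    nlinarith
  rcases eq_or_lt_of_le (L.coe_nonneg) with hL | hL
  · -- L = 0
    by_contra hcon
    push_neg at hcon
    rw [← hL] at hcon
    simp only [mul_zero, zero_mul] at hcon
    have h := key ((F x + 1) / ‖g‖ ^ 2) (div_nonneg (by linarith [hpos x]) hcon.le)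
    rw [div_mul_cancel₀ _ (ne_of_gt hcon)] at h
    rw [← hL] at h
    simp only [zero_div, zero_mul] at h
    linarith
  · have h := key (1 / (L : ℝ)) (by positivity)
    have hL' : (L : ℝ) ≠ 0 := ne_of_gt hL
    have h' : (2 * (L : ℝ)) * (F x - 1 / (L : ℝ) * ‖g‖ ^ 2
        + (L : ℝ) / 2 * (1 / (L : ℝ)) ^ 2 * ‖g‖ ^ 2) = 2 * (L : ℝ) * F x - ‖g‖ ^ 2 := by
      field_simp
      ring
    nlinarith [mul_nonneg (by linarith : (0:ℝ) ≤ 2 * (L : ℝ)) h, h']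

lemma barrier (f f' : ℝ → ℝ) (ε : ℝ)
    (hd : ∀ t ≥ (0:ℝ), HasDerivAt f (f' t) t)
    (hpos : ∀ t ≥ (0:ℝ), f t ≤ ε → 0 ≤ f' t) :
    ∀ t ≥ (0:ℝ), min ε (f 0) ≤ f t := by
  intro t ht
  by_contra hlt
  push_neg at hlt
  set m := min ε (f 0) with hm
  have ht0 : 0 < t := ht.lt_of_ne (by rintro rfl; exact absurd hlt (not_lt.2 (min_le_right _ _)))
  set S := {s | s ∈ Set.Icc (0:ℝ) t ∧ m ≤ f s} with hS
  have hcontOn : ContinuousOn f (Set.Icc 0 t) := fun s hs =>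
    ((hd s hs.1).continuousAt).continuousWithinAt
  have hScl : IsClosed S := by
    have : S = Set.Icc (0:ℝ) t ∩ f ⁻¹' Set.Ici m := rfl
    rw [this]
    exact hcontOn.preimage_isClosed_of_isClosed isClosed_Icc isClosed_Ici
  have hSne : S.Nonempty := ⟨0, ⟨le_refl 0, ht0.le⟩, min_le_right _ _⟩
  have hScomp : IsCompact S := (isCompact_Icc).of_isClosed_subset hScl (fun s hs => hs.1)
  have hcS : sSup S ∈ S := hScomp.sSup_mem hSne
  set c := sSup S with hc
  have hct : c < t := lt_of_le_of_ne hcS.1.2 (by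
    intro h; exact absurd hcS.2 (not_le.2 (h ▸ hlt)))
  have hc0 : 0 ≤ c := hcS.1.1
  have hkey : ∀ s ∈ Set.Ioc c t, f s < m := by
    intro s hs
    by_contra h
    push_neg at h
    exact absurd (le_csSup hScomp.bddAbove ⟨⟨hc0.trans hs.1.le, hs.2⟩, h⟩) (not_le.2 hs.1)
  have hmono : MonotoneOn f (Set.Icc c t) := by
    apply monotoneOn_of_deriv_nonneg (convex_Icc c t)
    · exact fun s hs => ((hd s (hc0.trans hs.1)).continuousAt).continuousWithinAt
    · intro s hs
      rw [interior_Icc] at hs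
      exact ((hd s (hc0.trans hs.1.le)).differentiableAt).differentiableWithinAt
    · intro s hs
      rw [interior_Icc] at hs
      have hs0 : (0:ℝ) ≤ s := hc0.trans hs.1.le
      rw [(hd s hs0).deriv]
      exact hpos s hs0 ((hkey s ⟨hs.1, hs.2.le⟩).le.trans (min_le_left _ _))
  have := hmono (Set.left_mem_Icc.2 hct.le) (Set.right_mem_Icc.2 hct.le) hct.le
  linarith [hcS.2]

/-- **Accuracy failure of the constant-noise (Langevin) swarm system:** along the
mean-field flow, the provisional minimum `f̄(t) = ∫ F dρ_t` satisfies
`f̄(t) ≥ min {ε, f̄(0)}` with `ε = dξ / (2L + D + dξ/ε' + dL/ε')`; since `F* = 0`,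
`f̄` never falls below `min {F* + ε, f̄(0)}`. -/
theorem langevin_accuracy_failure
    {d : ℕ} (F : EuclideanSpace ℝ (Fin d) → ℝ)
    (hF : ContDiff ℝ 2 F)
    (L : NNReal) (hLip : LipschitzWith L (fun x => gradient F x))
    (D : ℝ) (hFb : ∀ x, 0 ≤ F x ∧ F x ≤ D)
    (hlapb : ∀ x, |laplacian F x| ≤ d * L)
    (xstar : EuclideanSpace ℝ (Fin d)) (R ξ : ℝ) (hR : 0 < R) (hξ : 0 < ξ)
    (hFxstar : F xstar = 0)
    (hlapconv : ∀ x ∈ Metric.ball xstar R, ξ * d ≤ laplacian F x)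
    (ε' : ℝ) (hε' : 0 < ε') (hsub : {x | F x ≤ ε'} ⊆ Metric.ball xstar R)
    (ρ : ℝ → Measure (EuclideanSpace ℝ (Fin d)))
    (hprob : ∀ t, IsProbabilityMeasure (ρ t))
    (hint1 : ∀ t, Integrable F (ρ t))
    (hint2 : ∀ t, Integrable (fun x => (F x) ^ 2) (ρ t))
    (hint3 : ∀ t, Integrable (fun x => ‖gradient F x‖ ^ 2) (ρ t))
    (hint4 : ∀ t, Integrable (laplacian F) (ρ t))
    (fbar : ℝ → ℝ) (hfbar : ∀ t, fbar t = ∫ x, F x ∂(ρ t))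
    (hderiv : ∀ t ≥ (0 : ℝ), HasDerivAt fbar
      (-(∫ x, ‖gradient F x‖ ^ 2 ∂(ρ t))
        - ((∫ x, (F x) ^ 2 ∂(ρ t)) - (fbar t) ^ 2)
        + ∫ x, laplacian F x ∂(ρ t)) t) :
    ∀ t ≥ (0 : ℝ),
      min ((d : ℝ) * ξ / (2 * (L : ℝ) + D + d * ξ / ε' + d * (L : ℝ) / ε'))
        (fbar 0) ≤ fbar t := by
  have hD0 : 0 ≤ D := le_trans (hFb 0).1 (hFb 0).2
  set K : ℝ := 2 * (L : ℝ) + D + d * ξ / ε' + d * (L : ℝ) / ε' with hKdef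
  set ε : ℝ := (d : ℝ) * ξ / K with hεdef
  have hK0 : 0 ≤ K := by positivity
  have hKε : K * ε ≤ (d : ℝ) * ξ := by
    by_cases hK : K = 0
    · rw [hK, zero_mul]
      positivity
    · rw [hεdef, mul_comm, div_mul_cancel₀ _ hK]
  -- the derivative is nonnegative whenever fbar ≤ ε
  apply barrier fbar
    (fun t => -(∫ x, ‖gradient F x‖ ^ 2 ∂(ρ t))
        - ((∫ x, (F x) ^ 2 ∂(ρ t)) - (fbar t) ^ 2)
        + ∫ x, laplacian F x ∂(ρ t)) ε hderiv
  intro s _ hfle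
  haveI := hprob s
  have fnn : 0 ≤ fbar s := by
    rw [hfbar s]; exact integral_nonneg (fun x => (hFb x).1)
  -- gradient term
  have hG : (∫ x, ‖gradient F x‖ ^ 2 ∂(ρ s)) ≤ 2 * (L : ℝ) * fbar s := by
    rw [hfbar s, ← integral_const_mul]
    exact integral_mono (hint3 s) ((hint1 s).const_mul _)
      (grad_sq_le F hF L hLip (fun x => (hFb x).1))
  -- second moment term
  have hQ : (∫ x, (F x) ^ 2 ∂(ρ s)) ≤ D * fbar s := by
    rw [hfbar s, ← integral_const_mul]
    exact integral_mono (hint2 s) ((hint1 s).const_mul _)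
      (fun x => by nlinarith [(hFb x).1, (hFb x).2])
  -- Laplacian term
  set sset : Set (EuclideanSpace ℝ (Fin d)) := {x | F x ≤ ε'} with hsset
  have hms : MeasurableSet sset :=
    measurableSet_le (hF.continuous.measurable) measurable_const
  set p : ℝ := (ρ s sset).toReal with hp
  set q : ℝ := (ρ s ssetᶜ).toReal with hq
  have hpq : p + q = 1 := by
    rw [hp, hq, ← ENNReal.toReal_add (measure_ne_top _ _) (measure_ne_top _ _),
      measure_add_measure_compl hms, measure_univ, ENNReal.toReal_one]
  have hI1 : (ξ * (d : ℝ)) * p ≤ ∫ x in sset, laplacian F x ∂(ρ s) :=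
    setIntegral_ge_of_const_le_real hms (measure_ne_top _ _)
      (fun x hx => hlapconv x (hsub hx)) ((hint4 s).integrableOn)
  have hI2 : (-((d : ℝ) * (L : ℝ))) * q ≤ ∫ x in ssetᶜ, laplacian F x ∂(ρ s) :=
    setIntegral_ge_of_const_le_real hms.compl (measure_ne_top _ _)
      (fun x _ => neg_le_of_abs_le (hlapb x)) ((hint4 s).integrableOn)
  have htot : (∫ x, laplacian F x ∂(ρ s))
      = (∫ x in sset, laplacian F x ∂(ρ s)) + ∫ x in ssetᶜ, laplacian F x ∂(ρ s) :=
    (integral_add_compl hms (hint4 s)).symm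
  -- Markov
  have hqb : q ≤ fbar s / ε' := by
    have hmk := mul_meas_ge_le_integral_of_nonneg
      (Filter.Eventually.of_forall (fun x => (hFb x).1)) (hint1 s) ε'
    have hsubm : (ρ s) ssetᶜ ≤ (ρ s) {x | ε' ≤ F x} := by
      apply measure_mono
      intro x hx
      have hx' : ¬ F x ≤ ε' := hx
      exact le_of_lt (not_le.mp hx')
    have h1 : q ≤ ((ρ s) {x | ε' ≤ F x}).toReal :=
      ENNReal.toReal_mono (measure_ne_top _ _) hsubm
    rw [← hfbar s] at hmk
    rw [le_div_iff₀ hε']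
    calc q * ε' ≤ ((ρ s) {x | ε' ≤ F x}).toReal * ε' :=
          mul_le_mul_of_nonneg_right h1 hε'.le
      _ = ε' * ((ρ s) {x | ε' ≤ F x}).toReal := mul_comm _ _
      _ ≤ fbar s := hmk
  have hp' : p = 1 - q := by linarith
  rw [hp'] at hI1
  have hmul : (ξ * (d : ℝ) + (d : ℝ) * (L : ℝ)) * q
      ≤ (ξ * (d : ℝ) + (d : ℝ) * (L : ℝ)) * (fbar s / ε') :=
    mul_le_mul_of_nonneg_left hqb (by positivity)
  have hexp : (ξ * (d : ℝ) + (d : ℝ) * (L : ℝ)) * (fbar s / ε')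
      = ((d : ℝ) * ξ / ε') * fbar s + ((d : ℝ) * (L : ℝ) / ε') * fbar s := by
    ring
  have hΛ : ξ * (d : ℝ) ≤ (∫ x, laplacian F x ∂(ρ s))
      + (((d : ℝ) * ξ / ε') * fbar s + ((d : ℝ) * (L : ℝ) / ε') * fbar s) := by
    rw [htot]
    nlinarith [hI1, hI2, hmul, hexp]
  -- combine
  have h1 : K * fbar s ≤ K * ε := mul_le_mul_of_nonneg_left hfle hK0
  have h1' : 2 * (L : ℝ) * fbar s + D * fbar s + ((d : ℝ) * ξ / ε') * fbar s
      + ((d : ℝ) * (L : ℝ) / ε') * fbar s ≤ (d : ℝ) * ξ := by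
    calc 2 * (L : ℝ) * fbar s + D * fbar s + ((d : ℝ) * ξ / ε') * fbar s
        + ((d : ℝ) * (L : ℝ) / ε') * fbar s = K * fbar s := by rw [hKdef]; ring
      _ ≤ K * ε := h1
      _ ≤ (d : ℝ) * ξ := hKε
  nlinarith [hG, hQ, sq_nonneg (fbar s), hΛ, h1']
end

section
/- Let F : ℝ^d → ℝ be continuously differentiable with ∇F locally Lipschitz, and let Ω ⊆ ℝ^d be an open set such that ∇F(y) = 0 for every y in the topological boundary of Ω. If x : [0,∞) → ℝ^d is differentiable with x'(t) = -∇F(x(t)) for all t ≥ 0 and x(0) ∉ closure(Ω), then x(t) ∉ Ω for all t ≥ 0. -/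
open Set Metric

/-- **A gradient-flow trajectory cannot enter an open set whose boundary consists
of critical points:** if `∇F` is locally Lipschitz, `∇F = 0` on `∂Ω`, and
`x' = -∇F(x)` with `x(0) ∉ closure Ω`, then `x(t) ∉ Ω` for all `t ≥ 0`. -/
theorem gradient_flow_avoids_open_set
    {d : ℕ} (F : EuclideanSpace ℝ (Fin d) → ℝ) (hF : ContDiff ℝ 1 F)
    (hLip : LocallyLipschitz (fun x => gradient F x))
    (Ω : Set (EuclideanSpace ℝ (Fin d))) (hΩ : IsOpen Ω)
    (hbd : ∀ y ∈ frontier Ω, gradient F y = 0)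
    (x : ℝ → EuclideanSpace ℝ (Fin d))
    (hx : ∀ t ≥ (0 : ℝ), HasDerivAt x (-gradient F (x t)) t)
    (hx0 : x 0 ∉ closure Ω) :
    ∀ t ≥ (0 : ℝ), x t ∉ Ω := by
  intro t₁ ht₁ hmem
  have hcont : ∀ u : ℝ, 0 ≤ u → ContinuousAt x u := fun u hu => (hx u hu).continuousAt
  -- first entry time into `closure Ω`
  set S : Set ℝ := Icc 0 t₁ ∩ x ⁻¹' (closure Ω) with hS
  have hSne : S.Nonempty := ⟨t₁, ⟨ht₁, le_rfl⟩, subset_closure hmem⟩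
  have hSbdd : BddBelow S := ⟨0, fun u hu => hu.1.1⟩
  have hSclosed : IsClosed S := by
    have hxc : ContinuousOn x (Icc 0 t₁) := fun u hu => (hcont u hu.1).continuousWithinAt
    exact hxc.preimage_isClosed_of_isClosed isClosed_Icc isClosed_closure
  set s := sInf S with hs
  have hsS : s ∈ S := hSclosed.csInf_mem hSne hSbdd
  have hs0 : (0 : ℝ) ≤ s := hsS.1.1
  have hsc : x s ∈ closure Ω := hsS.2
  -- `x s` is on the frontier of `Ω`
  have hsnot : x s ∉ Ω := by
    intro hxin
    have hsne : s ≠ 0 := fun h => hx0 (h ▸ hsc)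
    have hspos : 0 < s := lt_of_le_of_ne hs0 (Ne.symm hsne)
    have hev : ∀ᶠ u in nhds s, x u ∈ Ω := (hcont s hs0).preimage_mem_nhds (hΩ.mem_nhds hxin)
    rcases Metric.eventually_nhds_iff.mp hev with ⟨ε, hε, hball⟩
    set u := max (s / 2) (s - ε / 2) with hu
    have hu1 : s / 2 ≤ u := le_max_left _ _
    have hu2 : s - ε / 2 ≤ u := le_max_right _ _
    have hu0 : 0 ≤ u := le_trans (by linarith) hu1
    have hus : u < s := max_lt (by linarith) (by linarith)
    have huε : dist u s < ε := by
      rw [Real.dist_eq, abs_of_nonpos (by linarith)]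
      linarith
    have huS : u ∈ S := ⟨⟨hu0, le_trans hus.le hsS.1.2⟩, subset_closure (hball huε)⟩
    exact absurd (csInf_le hSbdd huS) (not_le.mpr hus)
  have hfr : x s ∈ frontier Ω := by
    rw [frontier, hΩ.interior_eq]; exact ⟨hsc, hsnot⟩
  have hgrad0 : gradient F (x s) = 0 := hbd _ hfr
  -- local Lipschitz data around `x s`
  obtain ⟨K, U, hU, hKU⟩ := hLip (x s)
  obtain ⟨r, hr, hrU⟩ := Metric.nhds_basis_closedBall.mem_iff.mp hU
  have hKball : LipschitzOnWith K (fun y => -gradient F y) (closedBall (x s) r) :=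
    (hKU.mono hrU).neg
  -- the set of times `u ∈ [0, s]` from which `x` is constantly `x s`
  set A : Set ℝ := {u | u ∈ Icc 0 s ∧ ∀ u' ∈ Icc u s, x u' = x s} with hA
  have hsA : s ∈ A := ⟨⟨hs0, le_rfl⟩, fun u' hu' => by rw [le_antisymm hu'.2 hu'.1]⟩
  have hAne : A.Nonempty := ⟨s, hsA⟩
  have hAbdd : BddBelow A := ⟨0, fun u hu => hu.1.1⟩
  set τ := sInf A with hτ
  have hτ0 : 0 ≤ τ := le_csInf hAne fun u hu => hu.1.1
  have hτs : τ ≤ s := csInf_le hAbdd hsA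
  have hAbove : ∀ u', τ < u' → u' ≤ s → x u' = x s := by
    intro u' h hle
    obtain ⟨a, haA, hav⟩ : ∃ a ∈ A, a < u' := by
      by_contra hcon
      push_neg at hcon
      exact absurd (le_csInf hAne hcon) (not_le.mpr h)
    exact haA.2 u' ⟨hav.le, hle⟩
  have hxτ : x τ = x s := by
    rcases eq_or_lt_of_le hτs with h | h
    · rw [h]
    · have hlim : Filter.Tendsto x (nhdsWithin τ (Ioi τ)) (nhds (x τ)) :=
        (hcont τ hτ0).continuousWithinAt
      have hev : ∀ᶠ v in nhdsWithin τ (Ioi τ), x v = x s := by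
        filter_upwards [Ioc_mem_nhdsGT_of_mem ⟨le_rfl, h⟩] with v hv
        exact hAbove v hv.1 hv.2
      have h1 : Filter.Tendsto x (nhdsWithin τ (Ioi τ)) (nhds (x s)) :=
        Filter.Tendsto.congr' (Filter.EventuallyEq.symm hev) tendsto_const_nhds
      exact tendsto_nhds_unique hlim h1
  have hτA : τ ∈ A := by
    refine ⟨⟨hτ0, hτs⟩, fun u' hu' => ?_⟩
    rcases eq_or_lt_of_le hu'.1 with h | h
    · rw [← h]; exact hxτ
    · exact hAbove u' h hu'.2
  -- `τ` must be `0`, else we can extend backwards by ODE uniqueness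
  have hτzero : τ = 0 := by
    by_contra hne
    have hτpos : 0 < τ := lt_of_le_of_ne hτ0 (Ne.symm hne)
    have hnb : x ⁻¹' closedBall (x s) r ∈ nhds τ :=
      (hcont τ hτ0).preimage_mem_nhds (by rw [hxτ]; exact closedBall_mem_nhds _ hr)
    rcases Metric.mem_nhds_iff.mp hnb with ⟨ε, hε, hball⟩
    set δ := min (τ / 2) (ε / 2) with hδ
    have hδ1 : δ ≤ τ / 2 := min_le_left _ _
    have hδ2 : δ ≤ ε / 2 := min_le_right _ _
    have hδpos : 0 < δ := lt_min (by linarith) (by linarith)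
    have hδτ : τ - δ < τ := by linarith
    have hδ0 : 0 ≤ τ - δ := by linarith
    have hEq : EqOn x (fun _ => x s) (Icc (τ - δ) τ) := by
      apply ODE_solution_unique_of_mem_Icc_left
        (v := fun _ y => -gradient F y) (s := fun _ => closedBall (x s) r)
        (K := K)
      · exact fun _ _ => hKball
      · exact fun u hu => ((hcont u (le_trans hδ0 hu.1)).continuousWithinAt)
      · exact fun u hu => ((hx u (le_trans hδ0 hu.1.le)).hasDerivWithinAt)
      · intro u hu
        apply hball
        rw [mem_ball, Real.dist_eq, abs_of_nonpos (by linarith [hu.2])]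
        linarith [hu.1.le, hu.2]
      · exact continuousOn_const
      · intro u hu
        simpa [hgrad0] using hasDerivWithinAt_const u (Iic u) (x s)
      · exact fun u _ => Metric.mem_closedBall_self hr.le
      · exact hxτ
    have hmemA : τ - δ ∈ A := by
      refine ⟨⟨hδ0, le_trans hδτ.le hτs⟩, fun u' hu' => ?_⟩
      rcases le_or_gt u' τ with h | h
      · exact hEq ⟨hu'.1, h⟩
      · exact hAbove u' h hu'.2
    exact absurd (csInf_le hAbdd hmemA) (not_le.mpr hδτ)
  have h0 : x 0 = x s := hτzero ▸ hxτ
  exact hx0 (h0 ▸ hsc)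
end

section
/- Let F : ℝ^d → ℝ be continuously differentiable with F(x) ≥ F* for all x, let ε > 0 and T_c ∈ ℝ, and let f̄ : [T_c,∞) → ℝ be continuous with f̄(t) > F* + ε for all t ≥ T_c. Let x : [T_c,∞) → ℝ^d and m : [T_c,∞) → ℝ be differentiable with x'(t) = -∇F(x(t)) and m'(t) = -m(t)·(F(x(t)) - f̄(t)) for all t ≥ T_c, and suppose F(x(T_c)) < F* + ε/2 and m(T_c) > 0. Then for all t ≥ T_c: F(x(t)) < F* + ε/2, and m(t) ≥ exp( (ε/2)·(t - T_c) )·m(T_c); in particular the mass grows without bound as t → ∞. -/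
open Filter

/-- **Trajectory estimate behind the mass blow-up lemma:** if the provisional
minimum `f̄` stays above `F* + ε` while an agent follows the gradient flow
`x' = -∇F(x)` with mass `m' = -m (F(x) - f̄)`, starting in
`{F < F* + ε/2}` with positive mass, then its objective value stays below
`F* + ε/2` and its mass grows at least like `e^{(ε/2)(t - T_c)} m(T_c)`;
in particular the mass grows without bound. -/
theorem mass_exponential_growth
    {d : ℕ} (F : EuclideanSpace ℝ (Fin d) → ℝ) (hF : ContDiff ℝ 1 F)
    (Fstar : ℝ) (hlb : ∀ x, Fstar ≤ F x)
    (ε : ℝ) (hε : 0 < ε) (Tc : ℝ)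
    (fbar : ℝ → ℝ) (hfc : ContinuousOn fbar (Set.Ici Tc))
    (hfbar : ∀ t ≥ Tc, Fstar + ε < fbar t)
    (x : ℝ → EuclideanSpace ℝ (Fin d)) (m : ℝ → ℝ)
    (hx : ∀ t ≥ Tc, HasDerivAt x (-gradient F (x t)) t)
    (hm : ∀ t ≥ Tc, HasDerivAt m (-(m t) * (F (x t) - fbar t)) t)
    (hx0 : F (x Tc) < Fstar + ε / 2) (hm0 : 0 < m Tc) :
    (∀ t ≥ Tc, F (x t) < Fstar + ε / 2 ∧
        Real.exp ((ε / 2) * (t - Tc)) * m Tc ≤ m t) ∧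
      Tendsto m atTop atTop := by
  -- derivative of F ∘ x
  have hFx : ∀ t ≥ Tc, HasDerivAt (fun s => F (x s)) (-(‖gradient F (x t)‖ ^ 2)) t := by
    intro t ht
    have hd : DifferentiableAt ℝ F (x t) := (hF.differentiable one_ne_zero).differentiableAt
    have hg : HasGradientAt F (gradient F (x t)) (x t) := hd.hasGradientAt
    have h := hg.hasFDerivAt.comp_hasDerivAt t (hx t ht)
    refine h.congr_deriv ?_
    rw [InnerProductSpace.toDual_apply_apply, inner_neg_right, real_inner_self_eq_norm_sq]
  have hcontFx : ContinuousOn (fun s => F (x s)) (Set.Ici Tc) := fun t ht =>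
    ((hFx t ht).continuousAt).continuousWithinAt
  -- F ∘ x is antitone on [Tc, ∞)
  have hanti : AntitoneOn (fun s => F (x s)) (Set.Ici Tc) := by
    apply antitoneOn_of_deriv_nonpos (convex_Ici Tc) hcontFx
    · intro t ht
      rw [interior_Ici] at ht
      exact ((hFx t ht.le).differentiableAt).differentiableWithinAt
    · intro t ht
      rw [interior_Ici] at ht
      rw [(hFx t ht.le).deriv]
      simp [sq_nonneg]
  have bF : ∀ t ≥ Tc, F (x t) < Fstar + ε / 2 := fun t ht =>
    lt_of_le_of_lt (hanti (Set.self_mem_Ici) ht ht) hx0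
  -- the function u and its primitive
  set u : ℝ → ℝ := fun s => F (x s) - fbar s with hu_def
  have hu_cont : ContinuousOn u (Set.Ici Tc) := hcontFx.sub hfc
  set G : ℝ → ℝ := fun t => ∫ s in Tc..t, u s with hG_def
  -- the key identity m t = m Tc * exp (-G t)
  have key : ∀ t ≥ Tc, m t = m Tc * Real.exp (-G t) := by
    intro t ht
    have hIcc : Set.Icc Tc t ⊆ Set.Ici Tc := Set.Icc_subset_Ici_self
    have huI : MeasureTheory.IntegrableOn u (Set.Icc Tc t) := (hu_cont.mono hIcc).integrableOn_Icc
    have hGc : ContinuousOn G (Set.Icc Tc t) := by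
      have := intervalIntegral.continuousOn_primitive_interval
        (f := u) (μ := MeasureTheory.volume) (a := Tc) (b := t)
        (by rwa [Set.uIcc_of_le ht])
      rwa [Set.uIcc_of_le ht] at this
    have hGd : ∀ s ∈ Set.Ioo Tc t, HasDerivAt G (u s) s := by
      intro s hs
      have hsmem : Set.Ici Tc ∈ nhds s := Ici_mem_nhds hs.1
      have hca : ContinuousAt u s := hu_cont.continuousAt hsmem
      refine intervalIntegral.integral_hasDerivAt_right ?_ ?_ hca
      · exact (hu_cont.mono (by rw [Set.uIcc_of_le hs.1.le]; exact
          Set.Icc_subset_Ici_self)).intervalIntegrable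
      · exact ⟨Set.Ioi Tc, Ioi_mem_nhds hs.1,
          (hu_cont.mono Set.Ioi_subset_Ici_self).aestronglyMeasurable measurableSet_Ioi⟩
    -- ψ = m * exp G has zero derivative
    have hψc : ContinuousOn (fun s => m s * Real.exp (G s)) (Set.Icc Tc t) := by
      refine ContinuousOn.mul ?_ (Real.continuous_exp.comp_continuousOn hGc)
      exact fun s hs => ((hm s hs.1).continuousAt).continuousWithinAt
    have hψd : ∀ s ∈ Set.Ioo Tc t,
        HasDerivWithinAt (fun s => m s * Real.exp (G s)) ((fun _ => (0:ℝ)) s)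
          (Set.Ioi s) s := by
      intro s hs
      have hexp : HasDerivAt (fun s => Real.exp (G s)) (Real.exp (G s) * u s) s :=
        (hGd s hs).exp
      have := (hm s hs.1.le).mul hexp
      have h0 : -m s * (F (x s) - fbar s) * Real.exp (G s)
          + m s * (Real.exp (G s) * u s) = 0 := by
        simp only [hu_def]; ring
      rw [h0] at this
      exact this.hasDerivWithinAt
    have hint : IntervalIntegrable (fun _ => (0:ℝ)) MeasureTheory.volume Tc t :=
      intervalIntegrable_const
    have := intervalIntegral.integral_eq_sub_of_hasDeriv_right_of_le ht hψc hψd hint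
    simp only [intervalIntegral.integral_zero] at this
    have hGTc : G Tc = 0 := intervalIntegral.integral_same
    have heq : m t * Real.exp (G t) = m Tc := by
      have := this.symm
      rw [hGTc, Real.exp_zero, mul_one] at this
      linarith
    have hpos : Real.exp (G t) ≠ 0 := (Real.exp_pos _).ne'
    field_simp [Real.exp_neg]
    rw [Real.exp_neg, ← heq, mul_assoc, mul_inv_cancel₀ hpos, mul_one]
  -- lower bound on -G t
  have hGb : ∀ t ≥ Tc, (ε / 2) * (t - Tc) ≤ -G t := by
    intro t ht
    have hIcc : Set.Icc Tc t ⊆ Set.Ici Tc := Set.Icc_subset_Ici_self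
    have hneg : -G t = ∫ s in Tc..t, -u s := by
      simp [hG_def, intervalIntegral.integral_neg]
    rw [hneg]
    have hmono : ∫ s in Tc..t, (ε / 2) ≤ ∫ s in Tc..t, -u s := by
      apply intervalIntegral.integral_mono_on ht intervalIntegrable_const
      · exact ((hu_cont.neg).mono hIcc).intervalIntegrable_of_Icc ht
      · intro s hs
        have h1 := bF s hs.1
        have h2 := hfbar s hs.1
        simp only [hu_def, neg_sub]
        linarith
    calc (ε / 2) * (t - Tc) ≤ ∫ s in Tc..t, (ε / 2) := by
          rw [intervalIntegral.integral_const]; simp [smul_eq_mul]; ring_nf; rfl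
      _ ≤ _ := hmono
  have main : ∀ t ≥ Tc, F (x t) < Fstar + ε / 2 ∧
      Real.exp ((ε / 2) * (t - Tc)) * m Tc ≤ m t := by
    intro t ht
    refine ⟨bF t ht, ?_⟩
    rw [key t ht, mul_comm]
    exact mul_le_mul_of_nonneg_left (Real.exp_le_exp.2 (hGb t ht)) hm0.le
  refine ⟨main, ?_⟩
  have h1 : Tendsto (fun t => Real.exp ((ε / 2) * (t - Tc)) * m Tc) atTop atTop := by
    apply Tendsto.atTop_mul_const hm0
    apply Real.tendsto_exp_atTop.comp
    have : Tendsto (fun t : ℝ => t - Tc) atTop atTop :=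
      tendsto_atTop_add_const_right _ (-Tc) tendsto_id
    exact this.const_mul_atTop (by positivity)
  refine tendsto_atTop_mono' atTop ?_ h1
  filter_upwards [eventually_ge_atTop Tc] with t ht
  exact (main t ht).2
end

section
/- Let F : ℝ^d → ℝ be continuously differentiable with ∇F(x*) = 0 at a point x* ∈ ℝ^d, let m_c > 0, and let σ : ℝ → ℝ be continuous with σ ≥ 0 and σ(m) > 0 for all m ∈ (0, m_c). Let (μ_t)_{t≥0} be a family of finite nonnegative Borel measures on ℝ^d × ℝ with 0 < ∫ m dμ_t < ∞ and all integrals below finite, set f̄(t) = (∫ mF(x) dμ_t)/(∫ m dμ_t), and suppose (μ_t) is a weak solution of the mean-field equation: for every twice continuously differentiable, compactly supported φ : ℝ^d × ℝ → ℝ, the map t ↦ ∫ φ dμ_t is differentiable with derivative (d/dt)∫ φ dμ_t = ∫ [ -∇_x φ·∇F - (F(x) - f̄(t))·m·∂_m φ + σ(m)·Δ_x φ ] dμ_t. If at some time t* > 0 one has μ_{t*} = δ_{x*} ⊗ η for a Borel probability measure η on ℝ with η((-∞,0]) = 0, then η((0, m_c)) = 0; equivalently, the support of η is contained in [m_c,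 ∞). -/
open MeasureTheory

/-- Gradient of `φ(x,m)` in the `x` variable. -/
noncomputable def gradX {d : ℕ} (φ : EuclideanSpace ℝ (Fin d) × ℝ → ℝ)
    (x : EuclideanSpace ℝ (Fin d)) (m : ℝ) : EuclideanSpace ℝ (Fin d) :=
  gradient (fun y => φ (y, m)) x

/-- Partial derivative of `φ(x,m)` in the `m` variable. -/
noncomputable def dM {d : ℕ} (φ : EuclideanSpace ℝ (Fin d) × ℝ → ℝ)
    (x : EuclideanSpace ℝ (Fin d)) (m : ℝ) : ℝ :=
  deriv (fun s => φ (x, s)) m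

/-- Laplacian of `φ(x,m)` in the `x` variable. -/
noncomputable def lapX {d : ℕ} (φ : EuclideanSpace ℝ (Fin d) × ℝ → ℝ)
    (x : EuclideanSpace ℝ (Fin d)) (m : ℝ) : ℝ :=
  laplacian (fun y => φ (y, m)) x

/-- The laplacian only depends on the local behavior of the function. -/
lemma laplacian_congr {d : ℕ} {f g : EuclideanSpace ℝ (Fin d) → ℝ}
    {x : EuclideanSpace ℝ (Fin d)} (h : f =ᶠ[nhds x] g) :
    laplacian f x = laplacian g x := by
  have hg : (fun y => gradient f y) =ᶠ[nhds x] (fun y => gradient g y) := by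
    filter_upwards [h.eventually_nhds] with y hy
    have hy' : f =ᶠ[nhds y] g := hy
    unfold gradient
    rw [hy'.fderiv_eq]
  unfold laplacian
  rw [hg.fderiv_eq]

/-- The laplacian of `y ↦ c * ‖y - v‖²` equals `2 d c`. -/
lemma laplacian_quad {d : ℕ} (c : ℝ) (v x : EuclideanSpace ℝ (Fin d)) :
    laplacian (fun y => c * ‖y - v‖ ^ 2) x = 2 * d * c := by
  have hgrad : ∀ y : EuclideanSpace ℝ (Fin d),
      HasGradientAt (fun y => c * ‖y - v‖ ^ 2) ((2 * c) • (y - v)) y := by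
    intro y
    rw [hasGradientAt_iff_hasFDerivAt]
    have h1 : HasFDerivAt (fun y : EuclideanSpace ℝ (Fin d) => ‖y - v‖ ^ 2)
        (2 • (innerSL ℝ (y - v)).comp (ContinuousLinearMap.id ℝ _)) y := by
      simpa using ((hasFDerivAt_id y).sub_const v).norm_sq
    have h2 := h1.const_mul c
    convert h2 using 1
    · rfl
    ext w
    simp only [InnerProductSpace.toDual_apply_apply, ContinuousLinearMap.smul_apply,
      ContinuousLinearMap.coe_comp', Function.comp_apply, ContinuousLinearMap.coe_id', id_eq,
      innerSL_apply_apply, real_inner_smul_left, smul_eq_mul]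
    ring
  have hgfun : (fun y => gradient (fun y => c * ‖y - v‖ ^ 2) y)
      = fun y : EuclideanSpace ℝ (Fin d) => (2 * c) • (y - v) := by
    funext y
    exact (hgrad y).gradient
  have hfd : fderiv ℝ (fun y : EuclideanSpace ℝ (Fin d) => (2 * c) • (y - v)) x
      = (2 * c) • ContinuousLinearMap.id ℝ (EuclideanSpace ℝ (Fin d)) := by
    exact (((hasFDerivAt_id x).sub_const v).const_smul (2 * c)).fderiv
  unfold laplacian
  rw [hgfun, hfd]
  have : ∀ i : Fin d,
      ((2 * c) • ContinuousLinearMap.id ℝ (EuclideanSpace ℝ (Fin d)))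
        (EuclideanSpace.single i 1) i = 2 * c := by
    intro i
    simp [EuclideanSpace.single_apply]
  rw [Finset.sum_congr rfl (fun i _ => this i)]
  simp [Finset.card_univ]
  ring

/-- **Support of the mass marginal of a Dirac equilibrium:** if a weak solution
`(μ_t)` of the mean-field equation takes the form `δ_{x*} ⊗ η` at some time
`t* > 0`, where the annealing rate `σ` is continuous, nonnegative, and strictly
positive on `(0, m_c)`, and `η` charges only positive masses, then
`η((0, m_c)) = 0`, i.e. the support of `η` is contained in `[m_c, ∞)`. -/
theorem dirac_equilibrium_mass_support
    {d : ℕ} (hd : 0 < d)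
    (F : EuclideanSpace ℝ (Fin d) → ℝ) (hF : ContDiff ℝ 1 F)
    (xstar : EuclideanSpace ℝ (Fin d)) (hcrit : gradient F xstar = 0)
    (m_c : ℝ) (hmc : 0 < m_c)
    (σ : ℝ → ℝ) (hσc : Continuous σ) (hσ0 : ∀ m, 0 ≤ σ m)
    (hσpos : ∀ m ∈ Set.Ioo (0 : ℝ) m_c, 0 < σ m)
    (μ : ℝ → Measure (EuclideanSpace ℝ (Fin d) × ℝ))
    (hfin : ∀ t, IsFiniteMeasure (μ t))
    (hint_m : ∀ t, Integrable (fun p : EuclideanSpace ℝ (Fin d) × ℝ => p.2) (μ t))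
    (hint_mF : ∀ t, Integrable (fun p : EuclideanSpace ℝ (Fin d) × ℝ => p.2 * F p.1) (μ t))
    (hmpos : ∀ t, 0 < ∫ p, p.2 ∂(μ t))
    (fbar : ℝ → ℝ)
    (hfbar : ∀ t, fbar t = (∫ p, p.2 * F p.1 ∂(μ t)) / (∫ p, p.2 ∂(μ t)))
    (hweak : ∀ φ : EuclideanSpace ℝ (Fin d) × ℝ → ℝ,
      ContDiff ℝ 2 φ → HasCompactSupport φ →
      ∀ t ≥ (0 : ℝ), HasDerivAt (fun s => ∫ p, φ p ∂(μ s))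
        (∫ p, (-(inner ℝ (gradX φ p.1 p.2) (gradient F p.1) : ℝ)
            - (F p.1 - fbar t) * p.2 * dM φ p.1 p.2
            + σ p.2 * lapX φ p.1 p.2) ∂(μ t)) t)
    (tstar : ℝ) (htstar : 0 < tstar)
    (η : Measure ℝ) [IsProbabilityMeasure η] (hη : η (Set.Iic 0) = 0)
    (hμt : μ tstar = (Measure.dirac xstar).prod η) :
    η (Set.Ioo 0 m_c) = 0 := by
  classical
  -- the spatial bump, equal to 1 on the closed unit ball around `xstar`
  set f : ContDiffBump xstar := ⟨1, 2, one_pos, one_lt_two⟩ with hf_def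
  -- the mass bump, supported exactly on `(0, m_c)`
  set χ : ContDiffBump (m_c / 2) := ⟨m_c / 4, m_c / 2, by linarith, by linarith⟩ with hχ_def
  -- the test function
  set φ : EuclideanSpace ℝ (Fin d) × ℝ → ℝ :=
    fun p => ‖p.1 - xstar‖ ^ 2 * f p.1 * χ p.2 with hφ_def
  have hemb := measurableEmbedding_prodMk_left (β := ℝ) xstar
  have hφ2 : ContDiff ℝ 2 φ := by
    exact (((contDiff_norm_sq ℝ).comp (contDiff_fst.sub contDiff_const)).mul
      (f.contDiff.comp contDiff_fst)).mul (χ.contDiff.comp contDiff_snd)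
  have hφc : HasCompactSupport φ := by
    apply HasCompactSupport.intro
      ((isCompact_closedBall xstar 2).prod (isCompact_closedBall (m_c / 2) (m_c / 2)))
    intro p hp
    simp only [Set.mem_prod, not_and_or] at hp
    rcases hp with h | h
    · have hf0 : f p.1 = 0 := by
        apply f.zero_of_le_dist
        simp only [Metric.mem_closedBall, not_le] at h
        simpa [dist_comm] using h.le
      simp [hφ_def, hf0]
    · have hχ0 : χ p.2 = 0 := by
        apply χ.zero_of_le_dist
        simp only [Metric.mem_closedBall, not_le] at h
        simpa [dist_comm] using h.le
      simp [hφ_def, hχ0]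
  have hφ0 : ∀ p, 0 ≤ φ p := fun p =>
    mul_nonneg (mul_nonneg (sq_nonneg _) f.nonneg) χ.nonneg
  -- the derivative from the weak formulation
  have hder := hweak φ hφ2 hφc tstar htstar.le
  -- value at tstar is zero
  have hval : (∫ p, φ p ∂(μ tstar)) = 0 := by
    rw [hμt, Measure.dirac_prod, hemb.integral_map]
    simp [hφ_def]
  -- t ↦ ∫ φ dμ_t has a local minimum at tstar
  have hmin : IsLocalMin (fun s => ∫ p, φ p ∂(μ s)) tstar := by
    apply Filter.Eventually.of_forall
    intro s
    show (∫ p, φ p ∂(μ tstar)) ≤ ∫ p, φ p ∂(μ s)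
    rw [hval]
    exact integral_nonneg hφ0
  have hD0 := hmin.hasDerivAt_eq_zero hder
  -- compute fbar tstar = F xstar
  have hIm : (∫ p : EuclideanSpace ℝ (Fin d) × ℝ, p.2 ∂(μ tstar)) = ∫ m, m ∂η := by
    rw [hμt, Measure.dirac_prod, hemb.integral_map]
  have hImF : (∫ p : EuclideanSpace ℝ (Fin d) × ℝ, p.2 * F p.1 ∂(μ tstar))
      = (∫ m, m ∂η) * F xstar := by
    rw [hμt, Measure.dirac_prod, hemb.integral_map]
    exact integral_mul_const (F xstar) (fun m => m)
  have hpos : 0 < ∫ m, m ∂η := hIm ▸ hmpos tstar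
  have hfb : fbar tstar = F xstar := by
    rw [hfbar tstar, hIm, hImF, mul_comm, mul_div_assoc, div_self hpos.ne', mul_one]
  -- rewrite the derivative integral over η
  rw [hμt, Measure.dirac_prod, hemb.integral_map] at hD0
  -- the laplacian of the test function at xstar
  have hlap : ∀ m : ℝ, lapX φ xstar m = 2 * d * χ m := by
    intro m
    unfold lapX
    have hev : (fun y => φ (y, m)) =ᶠ[nhds xstar]
        (fun y => χ m * ‖y - xstar‖ ^ 2) := by
      filter_upwards [Metric.closedBall_mem_nhds xstar f.rIn_pos] with y hy
      simp only [hφ_def]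
      rw [f.one_of_mem_closedBall hy]
      ring
    rw [laplacian_congr hev, laplacian_quad]
  -- simplify the integrand pointwise
  have hintgd : (fun m : ℝ => -(inner ℝ (gradX φ (xstar, m).1 (xstar, m).2)
        (gradient F (xstar, m).1) : ℝ)
      - (F (xstar, m).1 - fbar tstar) * (xstar, m).2 * dM φ (xstar, m).1 (xstar, m).2
      + σ (xstar, m).2 * lapX φ (xstar, m).1 (xstar, m).2)
      = fun m => 2 * (d : ℝ) * (σ m * χ m) := by
    funext m
    simp only
    rw [hcrit, inner_zero_right, hfb, sub_self, hlap]
    ring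
  rw [hintgd, integral_const_mul] at hD0
  have h2d : (2 * (d : ℝ)) ≠ 0 := by positivity
  have hzero : (∫ m, σ m * χ m ∂η) = 0 := by
    rcases mul_eq_zero.mp hD0 with h | h
    · exact absurd h h2d
    · exact h
  -- integrability of σ·χ
  have hinteg : Integrable (fun m => σ m * χ m) η :=
    (hσc.mul χ.continuous).integrable_of_hasCompactSupport
      χ.hasCompactSupport.mul_left
  have hae := (integral_eq_zero_iff_of_nonneg
    (fun m => mul_nonneg (hσ0 m) χ.nonneg) hinteg).mp hzero
  have hae' : η {m | σ m * χ m ≠ 0} = 0 := by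
    rw [Filter.EventuallyEq, ae_iff] at hae
    simpa using hae
  refine measure_mono_null ?_ hae'
  intro m hm
  have h1 : 0 < σ m := hσpos m hm
  have h2 : 0 < χ m := by
    apply χ.pos_of_mem_ball
    rw [Real.ball_eq_Ioo]
    have hr : χ.rOut = m_c / 2 := rfl
    rw [hr]
    constructor <;> [linarith [hm.1]; linarith [hm.2]]
  exact (mul_pos h1 h2).ne'
end
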